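/- arXiv:2405.13430 — 4 statements merged into one kernel-verified Lean document; each statement's English description precedes it below -/
import Mathlib

section
/- Assume the symmetric unisolvent setup: B = {f_1,…,f_N} is a linearly independent symmetric set of functions, F = span(B), P = {a_1,…,a_N} is a symmetric set of N points, and the interpolation problem is unisolvent. Then the number of S_n-orbits of the set B (under the action σ • f = f ∘ (σ⁻¹ •)) equals the number of S_n-orbits of the set P (under the coordinate-permutation action). -/
/-- The action of `S_n` on `ℝ^n` by permuting coordinates: `σ • x = x ∘ σ⁻¹`. -/
def psmul {n : ℕ} (σ : Equiv.Perm (Fin n)) (x : Fin n → ℝ) : Fin n → ℝ := x ∘ ⇑σ⁻¹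

/-- The action of `S_n` on functions `ℝ^n → ℝ`: `(σ • f)(x) = f(σ⁻¹ • x)`. -/
def fsmul {n : ℕ} (σ : Equiv.Perm (Fin n)) (f : (Fin n → ℝ) → ℝ) : (Fin n → ℝ) → ℝ :=
  fun x => f (psmul σ⁻¹ x)

/-- The `S_n`-orbit of a point `x ∈ ℝ^n`. -/
def porbit {n : ℕ} (x : Fin n → ℝ) : Set (Fin n → ℝ) := {y | ∃ σ, psmul σ x = y}

/-- The `S_n`-orbit of a function `g : ℝ^n → ℝ`. -/
def forbit {n : ℕ} (g : (Fin n → ℝ) → ℝ) : Set ((Fin n → ℝ) → ℝ) := {h | ∃ σ, fsmul σ g = h}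

/-- The Lagrange interpolation problem with interpolation space `F` and nodes
`a 1, …, a N` is unisolvent. -/
def Unisolvent {n N : ℕ} (F : Submodule ℝ ((Fin n → ℝ) → ℝ))
    (a : Fin N → (Fin n → ℝ)) : Prop :=
  ∀ b : Fin N → ℝ, ∃! f : F, ∀ i, (f : (Fin n → ℝ) → ℝ) (a i) = b i

/-!
For each `σ`, the operator `g ↦ σ • g` preserves `F = span B` and permutes the basis `B`, so its
trace is the number of elements of `B` fixed by `σ`. Unisolvence makes evaluation at the nodes an
isomorphism `F ≃ ℝ^P`; in the corresponding Lagrange basis the diagonal entries of the same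
operator are `ℓ_p(σ⁻¹ • p)`, so the trace is also the number of nodes fixed by `σ`. The two
permutation actions of `S_n` thus have equal fixed-point counts, hence by Burnside's lemma equally
many orbits.
-/

open Finset Function MulAction

-- With this action `σ • x` is `psmul σ x` and `σ • g` is `fsmul σ g` by definition, so that
-- `porbit` and `forbit` are instances of `MulAction.orbit`.
attribute [local instance] arrowAction

section Trace

variable {R M ι : Type*} [CommRing R] [AddCommGroup M] [Module R M] [Fintype ι]

theorem LinearMap.trace_eq_sum_repr_apply_self (b : Module.Basis ι R M) (T : M →ₗ[R] M) :
    LinearMap.trace R M T = ∑ i, b.repr (T (b i)) i := by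
  classical
  simp only [LinearMap.trace_eq_matrix_trace R b, Matrix.trace, Matrix.diag,
    LinearMap.toMatrix_apply]

theorem LinearMap.trace_eq_card_of_forall_exists_apply_eq [Nontrivial R] [DecidableEq M]
    (b : Module.Basis ι R M) (T : M →ₗ[R] M) (hT : ∀ i, ∃ j, T (b i) = b j) :
    LinearMap.trace R M T = #{i | T (b i) = b i} := by
  rw [LinearMap.trace_eq_sum_repr_apply_self b, ← sum_boole]
  refine sum_congr rfl fun i _ => ?_
  obtain ⟨j, hj⟩ := hT i
  classical
  simp only [hj, b.repr_self, Finsupp.single_apply, b.injective.eq_iff]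

theorem LinearMap.trace_restrict_span_eq_card [Nontrivial R] [DecidableEq M] {v : ι → M}
    (hv : LinearIndependent R v) (L : M →ₗ[R] M)
    (hL : ∀ x ∈ Submodule.span R (Set.range v), L x ∈ Submodule.span R (Set.range v))
    (hLv : ∀ i, ∃ j, L (v i) = v j) :
    LinearMap.trace R _ (L.restrict hL) = #{i | L (v i) = v i} := by
  let b := Module.Basis.span hv
  have hb : ∀ i, (b i : M) = v i := fun i => congrArg Subtype.val (Module.Basis.span_apply hv i)
  have hLb : ∀ i j, L.restrict hL (b i) = b j ↔ L (v i) = v j := fun i j => by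
    rw [Subtype.ext_iff, LinearMap.coe_restrict_apply, hb, hb]
  rw [LinearMap.trace_eq_card_of_forall_exists_apply_eq b _
    fun i => (hLv i).imp fun j => (hLb i j).2]
  simp only [hLb]

end Trace

section Lagrange

variable {K X ι : Type*} [Field K] [Fintype ι]
  {F : Submodule K (X → K)} {a : ι → X}

noncomputable def lagrangeBasis (h : Bijective (LinearMap.funLeft K K a ∘ₗ F.subtype)) :
    Module.Basis ι K F :=
  .ofEquivFun (LinearEquiv.ofBijective _ h)

theorem lagrangeBasis_repr (h : Bijective (LinearMap.funLeft K K a ∘ₗ F.subtype)) (g : F)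
    (i : ι) : (lagrangeBasis h).repr g i = (g : X → K) (a i) :=
  Module.Basis.ofEquivFun_repr_apply _ g i

theorem trace_restrict_funLeft_eq_card [DecidableEq X]
    (h : Bijective (LinearMap.funLeft K K a ∘ₗ F.subtype)) (ha : Injective a) (e : X → X)
    (hF : ∀ g ∈ F, LinearMap.funLeft K K e g ∈ F) (he : ∀ i, ∃ j, e (a i) = a j) :
    LinearMap.trace K F ((LinearMap.funLeft K K e).restrict hF) = #{i | e (a i) = a i} := by
  let ℓ := lagrangeBasis h
  rw [LinearMap.trace_eq_sum_repr_apply_self ℓ, ← sum_boole]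
  refine sum_congr rfl fun i _ => ?_
  obtain ⟨j, hj⟩ := he i
  calc ℓ.repr ((LinearMap.funLeft K K e).restrict hF (ℓ i)) i = (ℓ i : X → K) (a j) := by
        rw [lagrangeBasis_repr, ← hj]; rfl
    _ = if e (a i) = a i then 1 else 0 := by
        classical
        simp only [← lagrangeBasis_repr h, ℓ, Module.Basis.repr_self, Finsupp.single_apply, hj,
          ha.eq_iff, eq_comm]

end Lagrange

theorem Unisolvent.bijective {n N : ℕ} {F : Submodule ℝ ((Fin n → ℝ) → ℝ)}
    {a : Fin N → Fin n → ℝ} (h : Unisolvent F a) :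
    Bijective (LinearMap.funLeft ℝ ℝ a ∘ₗ F.subtype) :=
  (bijective_iff_existsUnique _).2 fun b =>
    (h b).imp fun _ hg => ⟨funext hg.1, fun g hg' => hg.2 g (congrFun hg')⟩

section Burnside

variable {G Y ι : Type*} [Group G] [Fintype G] [MulAction G Y]

theorem SubMulAction.ncard_orbits_mul_card_eq_sum (p : SubMulAction G Y) [Finite p] :
    {O | ∃ y ∈ p, O = orbit G y}.ncard * Nat.card G =
      ∑ g : G, ((p : Set Y) ∩ fixedBy Y g).ncard := by
  classical
  have : Fintype p := .ofFinite p
  have horbits : {O | ∃ y ∈ p, O = orbit G y} =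
      Set.range fun q : orbitRel.Quotient G p => Subtype.val '' q.orbit := by
    ext O
    constructor
    · rintro ⟨y, hy, rfl⟩
      exact ⟨Quotient.mk'' ⟨y, hy⟩, SubMulAction.val_image_orbit _⟩
    · rintro ⟨q, rfl⟩
      induction q using Quotient.inductionOn' with
      | h y => exact ⟨y, y.2, SubMulAction.val_image_orbit y⟩
  have hinj : Injective fun q : orbitRel.Quotient G p => Subtype.val '' q.orbit :=
    (Set.image_injective.2 Subtype.val_injective).comp orbitRel.Quotient.orbit_injective
  rw [horbits, Set.ncard_range_of_injective hinj, Nat.card_eq_fintype_card,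
    Nat.card_eq_fintype_card, ← sum_card_fixedBy_eq_card_orbits_mul_card_group]
  refine sum_congr rfl fun g _ => ?_
  have hfixed : Subtype.val '' fixedBy p g = (p : Set Y) ∩ fixedBy Y g := by
    ext y
    simp [mem_fixedBy, and_comm]
  rw [← hfixed, Set.ncard_image_of_injective _ Subtype.val_injective, ← Nat.card_coe_set_eq,
    Nat.card_eq_fintype_card]

theorem ncard_orbits_range_mul_card [Fintype ι] [DecidableEq Y] {f : ι → Y} (hf : Injective f)
    (hS : ∀ g : G, ∀ y ∈ Set.range f, g • y ∈ Set.range f) :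
    {O | ∃ y ∈ Set.range f, O = orbit G y}.ncard * Nat.card G =
      ∑ g : G, #{i | g • f i = f i} := by
  let p : SubMulAction G Y := ⟨Set.range f, fun g _ hy => hS g _ hy⟩
  have : Finite p := Set.finite_range f
  refine (p.ncard_orbits_mul_card_eq_sum).trans (sum_congr rfl fun g _ => ?_)
  change (Set.range f ∩ fixedBy Y g).ncard = _
  rw [← Set.image_preimage_eq_range_inter, Set.ncard_image_of_injective _ hf,
    ← Set.ncard_coe_finset]
  congr 1
  ext i
  simp [mem_fixedBy]

end Burnside

/-- in the symmetric unisolvent setup (`B = {f_1,…,f_N}` a linearly independent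
symmetric set of functions, `F = span B`, `P = {a_1,…,a_N}` a symmetric set of `N` distinct
points, the interpolation problem unisolvent), the number of `S_n`-orbits of `B` equals the
number of `S_n`-orbits of `P`. -/
theorem stmt_4 {n N : ℕ} (f : Fin N → ((Fin n → ℝ) → ℝ)) (hf : LinearIndependent ℝ f)
    (hBsym : ∀ σ, ∀ g ∈ Set.range f, fsmul σ g ∈ Set.range f)
    (a : Fin N → (Fin n → ℝ)) (ha : Function.Injective a)
    (hPsym : ∀ σ, ∀ p ∈ Set.range a, psmul σ p ∈ Set.range a)
    (huni : Unisolvent (Submodule.span ℝ (Set.range f)) a) :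
    {O : Set ((Fin n → ℝ) → ℝ) | ∃ g ∈ Set.range f, O = forbit g}.ncard =
    {O : Set (Fin n → ℝ) | ∃ p ∈ Set.range a, O = porbit p}.ncard := by
  classical
  have hfix : ∀ σ : Equiv.Perm (Fin n), #{i | σ • f i = f i} = #{i | σ • a i = a i} := by
    intro σ
    set F := Submodule.span ℝ (Set.range f)
    let L := LinearMap.funLeft ℝ ℝ (σ⁻¹ • · : (Fin n → ℝ) → Fin n → ℝ)
    have hL : ∀ g ∈ F, L g ∈ F := fun g hg =>
      (Submodule.span_le (p := F.comap L)).2 (fun h hh => Submodule.subset_span (hBsym σ h hh)) hg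
    have hB := LinearMap.trace_restrict_span_eq_card hf L hL
      fun i => (hBsym σ (f i) ⟨i, rfl⟩).imp fun j hj => hj.symm
    have hP := trace_restrict_funLeft_eq_card huni.bijective ha _ hL
      fun i => (hPsym σ⁻¹ (a i) ⟨i, rfl⟩).imp fun j hj => hj.symm
    simp only [inv_smul_eq_iff, eq_comm (a := a _)] at hP
    exact_mod_cast hB.symm.trans hP
  change {O | ∃ g ∈ Set.range f, O = orbit (Equiv.Perm (Fin n)) g}.ncard =
    {O | ∃ p ∈ Set.range a, O = orbit (Equiv.Perm (Fin n)) p}.ncard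
  apply Nat.eq_of_mul_eq_mul_right (Nat.card_pos (α := Equiv.Perm (Fin n)))
  rw [ncard_orbits_range_mul_card hf.injective hBsym, ncard_orbits_range_mul_card ha hPsym]
  exact sum_congr rfl fun σ _ => hfix σ
end

section
/- Let σ ∈ S_n and x ∈ ℝ^n. For k ∈ {1,…,n} let c_k(x) be the number of distinct values attained by exactly k coordinates of x, and let c̃_k(σ) be the number of k-cycles of σ (counting each fixed point of σ as a 1-cycle). Suppose there exists k ∈ {1,…,n} such that c_k(x) < c̃_k(σ) and c_l(x) = c̃_l(σ) for all l with k < l ≤ n. Then σ • x ≠ x, i.e., x is not a fixed point of σ. -/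
/-- The type of a point `x ∈ ℝ^n`: the multiset of its fiber sizes; its count of `k` is
`c_k(x)`, the number of distinct values attained by exactly `k` coordinates of `x`. -/
noncomputable def ptype {n : ℕ} (x : Fin n → ℝ) : Multiset ℕ :=
  (Finset.image x Finset.univ).val.map fun v => (Finset.univ.filter fun j => x j = v).card

/-- The full cycle type of `σ ∈ S_n`: the multiset of lengths of all cycles of `σ`, counting
each fixed point as a 1-cycle; its count of `k` is `c̃_k(σ)`, the number of `k`-cycles. -/
def fullCycleType {n : ℕ} (σ : Equiv.Perm (Fin n)) : Multiset ℕ :=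
  σ.cycleType + Multiset.replicate (Finset.univ.filter fun j => σ j = j).card 1

open Finset Equiv Equiv.Perm

lemma aux_ptype_mul_count {n : ℕ} (x : Fin n → ℝ) (l : ℕ) :
    l * Multiset.count l (ptype x) =
      (Finset.univ.filter fun j => (Finset.univ.filter fun i => x i = x j).card = l).card := by
  classical
  set S := Finset.univ.filter fun j : Fin n =>
    (Finset.univ.filter fun i => x i = x j).card = l with hS
  set T := (Finset.image x Finset.univ).filter
    (fun v => (Finset.univ.filter fun i => x i = v).card = l) with hT
  have hmap : ∀ j ∈ S, x j ∈ T := by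
    intro j hj
    simp only [hS, Finset.mem_filter, Finset.mem_univ, true_and] at hj
    simp only [hT, Finset.mem_filter, Finset.mem_image]
    exact ⟨⟨j, Finset.mem_univ j, rfl⟩, hj⟩
  have hcard := Finset.card_eq_sum_card_fiberwise hmap
  have hfib : ∀ v ∈ T, (S.filter fun j => x j = v)
      = Finset.univ.filter fun i => x i = v := by
    intro v hv
    simp only [hT, Finset.mem_filter] at hv
    ext j
    simp only [hS, Finset.mem_filter, Finset.mem_univ, true_and]
    constructor
    · rintro ⟨-, h⟩; exact h
    · intro h; exact ⟨by rw [h]; exact hv.2, h⟩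
  have hSsum : S.card = T.card * l := by
    rw [hcard, Finset.sum_congr rfl fun v hv => by rw [hfib v hv]]
    rw [Finset.sum_congr rfl fun v hv => (Finset.mem_filter.mp hv).2]
    rw [Finset.sum_const, smul_eq_mul]
  have hcount : Multiset.count l (ptype x) = T.card := by
    rw [ptype, Multiset.count_map, hT]
    simp only [Finset.card_def, Finset.filter_val]
    exact congrArg _ (Multiset.filter_congr fun a _ => eq_comm)
  rw [hcount, hSsum, Nat.mul_comm]


lemma aux_orbit_fixed {n : ℕ} (σ : Equiv.Perm (Fin n)) {j : Fin n} (h : σ j = j) :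
    (Finset.univ.filter fun i => σ.SameCycle j i) = {j} := by
  ext i
  simp only [Finset.mem_filter, Finset.mem_univ, true_and, Finset.mem_singleton]
  constructor
  · rintro ⟨m, rfl⟩
    exact (Equiv.Perm.zpow_apply_eq_self_of_apply_eq_self h m)
  · rintro rfl; exact Equiv.Perm.SameCycle.refl σ _

lemma aux_orbit_moved {n : ℕ} (σ : Equiv.Perm (Fin n)) {j : Fin n} (h : σ j ≠ j) :
    (Finset.univ.filter fun i => σ.SameCycle j i) = (σ.cycleOf j).support := by
  ext i
  simp only [Finset.mem_filter, Finset.mem_univ, true_and,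
    Equiv.Perm.mem_support_cycleOf_iff]
  exact ⟨fun hs => ⟨hs, Equiv.Perm.mem_support.mpr h⟩, And.left⟩

lemma aux_fct_mul_count {n : ℕ} (σ : Equiv.Perm (Fin n)) (l : ℕ) (hl : 1 ≤ l) :
    l * Multiset.count l (fullCycleType σ) =
      (Finset.univ.filter fun j =>
        (Finset.univ.filter fun i => σ.SameCycle j i).card = l).card := by
  rcases eq_or_lt_of_le hl with h1 | h2
  · -- l = 1
    subst h1
    have hct : Multiset.count 1 σ.cycleType = 0 :=
      Multiset.count_eq_zero.mpr fun h => by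
        have := Equiv.Perm.two_le_of_mem_cycleType h; omega
    have hset : (Finset.univ.filter fun j : Fin n =>
        (Finset.univ.filter fun i => σ.SameCycle j i).card = 1)
        = Finset.univ.filter fun j => σ j = j := by
      apply Finset.filter_congr
      intro j _
      constructor
      · intro hc
        by_contra hmoved
        rw [aux_orbit_moved σ hmoved] at hc
        have := Equiv.Perm.two_le_card_support_cycleOf_iff.mpr hmoved
        omega
      · intro hfix
        rw [aux_orbit_fixed σ hfix, Finset.card_singleton]
    rw [hset, fullCycleType, Multiset.count_add, hct, Multiset.count_replicate]
    norm_num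
  · -- 2 ≤ l
    have hl2 : 2 ≤ l := h2
    have hrep : Multiset.count l
        (Multiset.replicate (Finset.univ.filter fun j : Fin n => σ j = j).card 1) = 0 := by
      rw [Multiset.count_replicate]
      exact if_neg (by omega)
    set S := Finset.univ.filter fun j : Fin n =>
      (Finset.univ.filter fun i => σ.SameCycle j i).card = l with hS
    set F := σ.cycleFactorsFinset.filter (fun c => c.support.card = l) with hF
    have hmoved : ∀ j ∈ S, σ j ≠ j := by
      intro j hj hfix
      simp only [hS, Finset.mem_filter, Finset.mem_univ, true_and,
        aux_orbit_fixed σ hfix, Finset.card_singleton] at hj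
      omega
    have hmap : ∀ j ∈ S, σ.cycleOf j ∈ F := by
      intro j hj
      have hm := hmoved j hj
      simp only [hS, Finset.mem_filter, Finset.mem_univ, true_and,
        aux_orbit_moved σ hm] at hj
      simp only [hF, Finset.mem_filter]
      exact ⟨Equiv.Perm.cycleOf_mem_cycleFactorsFinset_iff.mpr
        (Equiv.Perm.mem_support.mpr hm), hj⟩
    have hcard := Finset.card_eq_sum_card_fiberwise hmap
    have hfib : ∀ c ∈ F, (S.filter fun j => σ.cycleOf j = c) = c.support := by
      intro c hc
      simp only [hF, Finset.mem_filter] at hc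
      ext j
      simp only [Finset.mem_filter]
      constructor
      · rintro ⟨hjS, hcj⟩
        have hm := hmoved j hjS
        rw [← hcj]
        exact Equiv.Perm.mem_support_cycleOf_iff.mpr
          ⟨Equiv.Perm.SameCycle.refl σ j, Equiv.Perm.mem_support.mpr hm⟩
      · intro hjc
        have hcj : c = σ.cycleOf j := Equiv.Perm.cycle_is_cycleOf hjc hc.1
        have hjsupp : j ∈ (σ.cycleOf j).support := by rw [← hcj]; exact hjc
        have hm : σ j ≠ j := Equiv.Perm.mem_support.mp
          (Equiv.Perm.mem_support_cycleOf_iff.mp hjsupp).2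
        refine ⟨?_, hcj.symm⟩
        simp only [hS, Finset.mem_filter, Finset.mem_univ, true_and,
          aux_orbit_moved σ hm, ← hcj]
        exact hc.2
    have hSsum : S.card = F.card * l := by
      rw [hcard, Finset.sum_congr rfl fun c hc => by rw [hfib c hc]]
      rw [Finset.sum_congr rfl fun c hc => (Finset.mem_filter.mp hc).2]
      rw [Finset.sum_const, smul_eq_mul]
    have hcount : Multiset.count l σ.cycleType = F.card := by
      rw [Equiv.Perm.cycleType_def, Multiset.count_map, hF]
      simp only [Finset.card_def, Finset.filter_val]
      exact congrArg _ (Multiset.filter_congr fun a _ => by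
        simp only [Function.comp_apply]; exact eq_comm)
    rw [fullCycleType, Multiset.count_add, hrep, hcount, hSsum]
    rw [Nat.add_zero, Nat.mul_comm]

/-- if for some `k` with `1 ≤ k ≤ n` we have `c_k(x) < c̃_k(σ)` while
`c_l(x) = c̃_l(σ)` for all `k < l ≤ n`, then `σ • x ≠ x`. -/
theorem stmt_12 {n : ℕ} (σ : Equiv.Perm (Fin n)) (x : Fin n → ℝ) (k : ℕ)
    (hk1 : 1 ≤ k) (hkn : k ≤ n)
    (hlt : Multiset.count k (ptype x) < Multiset.count k (fullCycleType σ))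
    (heq : ∀ l, k < l → l ≤ n →
      Multiset.count l (ptype x) = Multiset.count l (fullCycleType σ)) :
    psmul σ x ≠ x := by
  classical
  intro hfix
  have hx' : ∀ j, x (σ j) = x j := by
    intro j
    have h := (congrFun hfix (σ j)).symm
    simpa [psmul] using h
  have hpow : ∀ (m : ℕ) (j : Fin n), x ((σ ^ m) j) = x j := by
    intro m j
    induction m with
    | zero => simp
    | succ m ih => rw [pow_succ', Equiv.Perm.mul_apply, hx', ih]
  have hsc : ∀ j i : Fin n, σ.SameCycle j i → x i = x j := by
    intro j i h
    obtain ⟨m, -, -, hm⟩ := h.exists_pow_eq σ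
    rw [← hm, hpow]
  have hsub : ∀ j : Fin n, (Finset.univ.filter fun i => σ.SameCycle j i)
      ⊆ (Finset.univ.filter fun i => x i = x j) := by
    intro j i hi
    simp only [Finset.mem_filter, Finset.mem_univ, true_and] at hi ⊢
    exact hsc j i hi
  have hcard_le : ∀ j : Fin n, (Finset.univ.filter fun i => σ.SameCycle j i).card
      ≤ (Finset.univ.filter fun i => x i = x j).card :=
    fun j => Finset.card_le_card (hsub j)
  have hcard_n : ∀ s : Finset (Fin n), s.card ≤ n := by
    intro s
    calc s.card ≤ Finset.univ.card := Finset.card_le_card (Finset.subset_univ s)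
    _ = n := by simp
  have hFG : ∀ l, k < l →
      (Finset.univ.filter fun j : Fin n =>
        (Finset.univ.filter fun i => x i = x j).card = l).card
      = (Finset.univ.filter fun j : Fin n =>
        (Finset.univ.filter fun i => σ.SameCycle j i).card = l).card := by
    intro l hkl
    by_cases hln : l ≤ n
    · have h1 := aux_ptype_mul_count x l
      have h2 := aux_fct_mul_count σ l (le_trans hk1 (le_of_lt hkl))
      rw [← h1, ← h2, heq l hkl hln]
    · push_neg at hln
      have e1 : (Finset.univ.filter fun j : Fin n =>
          (Finset.univ.filter fun i => x i = x j).card = l) = ∅ := by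
        rw [Finset.filter_eq_empty_iff]
        intro j _
        have := hcard_n (Finset.univ.filter fun i => x i = x j)
        omega
      have e2 : (Finset.univ.filter fun j : Fin n =>
          (Finset.univ.filter fun i => σ.SameCycle j i).card = l) = ∅ := by
        rw [Finset.filter_eq_empty_iff]
        intro j _
        have := hcard_n (Finset.univ.filter fun i => σ.SameCycle j i)
        omega
      rw [e1, e2]
  set A := Finset.univ.filter fun j : Fin n =>
    k < (Finset.univ.filter fun i => x i = x j).card with hA
  set B := Finset.univ.filter fun j : Fin n =>
    k < (Finset.univ.filter fun i => σ.SameCycle j i).card with hB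
  have hBA : B ⊆ A := by
    intro j hj
    simp only [hB, Finset.mem_filter, Finset.mem_univ, true_and] at hj
    simp only [hA, Finset.mem_filter, Finset.mem_univ, true_and]
    exact lt_of_lt_of_le hj (hcard_le j)
  have hAcard : A.card = ∑ l ∈ Finset.Ioc k n,
      (Finset.univ.filter fun j : Fin n =>
        (Finset.univ.filter fun i => x i = x j).card = l).card := by
    have hmap : ∀ j ∈ A, (Finset.univ.filter fun i => x i = x j).card ∈ Finset.Ioc k n := by
      intro j hj
      simp only [hA, Finset.mem_filter, Finset.mem_univ, true_and] at hj
      exact Finset.mem_Ioc.mpr ⟨hj, hcard_n _⟩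
    rw [Finset.card_eq_sum_card_fiberwise hmap]
    refine Finset.sum_congr rfl fun l hl => ?_
    congr 1
    ext j
    simp only [hA, Finset.mem_filter, Finset.mem_univ, true_and]
    constructor
    · rintro ⟨-, h⟩; exact h
    · intro h; exact ⟨h ▸ (Finset.mem_Ioc.mp hl).1, h⟩
  have hBcard : B.card = ∑ l ∈ Finset.Ioc k n,
      (Finset.univ.filter fun j : Fin n =>
        (Finset.univ.filter fun i => σ.SameCycle j i).card = l).card := by
    have hmap : ∀ j ∈ B,
        (Finset.univ.filter fun i => σ.SameCycle j i).card ∈ Finset.Ioc k n := by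
      intro j hj
      simp only [hB, Finset.mem_filter, Finset.mem_univ, true_and] at hj
      exact Finset.mem_Ioc.mpr ⟨hj, hcard_n _⟩
    rw [Finset.card_eq_sum_card_fiberwise hmap]
    refine Finset.sum_congr rfl fun l hl => ?_
    congr 1
    ext j
    simp only [hB, Finset.mem_filter, Finset.mem_univ, true_and]
    constructor
    · rintro ⟨-, h⟩; exact h
    · intro h; exact ⟨h ▸ (Finset.mem_Ioc.mp hl).1, h⟩
  have hABcard : A.card = B.card := by
    rw [hAcard, hBcard]
    exact Finset.sum_congr rfl fun l hl => hFG l (Finset.mem_Ioc.mp hl).1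
  have hAB : B = A := Finset.eq_of_subset_of_card_le hBA (le_of_eq hABcard)
  have hSk : (Finset.univ.filter fun j : Fin n =>
      (Finset.univ.filter fun i => σ.SameCycle j i).card = k)
      ⊆ (Finset.univ.filter fun j : Fin n =>
      (Finset.univ.filter fun i => x i = x j).card = k) := by
    intro j hj
    simp only [Finset.mem_filter, Finset.mem_univ, true_and] at hj ⊢
    have h1 : k ≤ (Finset.univ.filter fun i => x i = x j).card := hj ▸ hcard_le j
    have h2 : j ∉ B := by
      simp only [hB, Finset.mem_filter, Finset.mem_univ, true_and, hj]
      omega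
    have h3 : j ∉ A := fun hA' => h2 (hAB ▸ hA')
    have h4 : ¬ k < (Finset.univ.filter fun i => x i = x j).card := by
      intro hlt'
      exact h3 (by simp only [hA, Finset.mem_filter, Finset.mem_univ, true_and]; exact hlt')
    omega
  have hGF := Finset.card_le_card hSk
  have e1 := aux_ptype_mul_count x k
  have e2 := aux_fct_mul_count σ k hk1
  have hmul : k * Multiset.count k (ptype x) < k * Multiset.count k (fullCycleType σ) :=
    Nat.mul_lt_mul_of_le_of_lt (le_refl k) hlt (by omega)
  linarith [e1, e2, hGF, hmul]
end

section
/- The family of functions (χ_λ)_{λ a partition of n}, where χ_λ(σ) is the number of fixed points of σ ∈ S_n acting on an S_n-orbit in ℝ^n of type λ, is linearly independent in the space of real-valued functions on S_n: if real numbers (c_λ) satisfy Σ_λ c_λ · χ_λ(σ) = 0 for all σ ∈ S_n, then c_λ = 0 for every partition λ of n. -/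
/-- `χ(σ)` for the orbit of `w`: the number of fixed points of `σ` on the `S_n`-orbit of
`w`. -/
noncomputable def chi {n : ℕ} (w : Fin n → ℝ) (σ : Equiv.Perm (Fin n)) : ℕ :=
  Nat.card {y : Fin n → ℝ // y ∈ porbit w ∧ psmul σ y = y}

/-! Suppose some `c_λ ≠ 0` and choose such a `λ₀` with the fewest parts. Let `σ` be a
permutation whose cycles are exactly the fibers of `x λ₀`. A point fixed by `σ` is constant on
those fibers, so it takes at most as many values as `x λ₀`, and if it takes exactly as many, its
fibers are those of `x λ₀`. Hence `σ` has no fixed point on the orbit of any other `x λ` with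
`c_λ ≠ 0`, while it fixes `x λ₀` itself, and evaluating the relation at `σ` gives `c_λ₀ = 0`. -/

namespace Equiv.Perm

variable {α β γ : Type*}

theorem SameCycle.map_of_semiconj [Finite β] {σ : Perm α} {τ : Perm β} {g : β → α}
    (hg : Function.Semiconj g τ σ) {a b : β} (h : τ.SameCycle a b) :
    σ.SameCycle (g a) (g b) := by
  obtain ⟨k, rfl⟩ := h.exists_nat_pow_eq
  exact ⟨k, by rw [zpow_natCast, coe_pow, coe_pow, (hg.iterate_right k).eq]⟩

theorem SameCycle.apply_eq_of_forall_apply_eq [Finite α] {σ : Perm α} {y : α → γ}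
    (hy : ∀ a, y (σ a) = y a) {a b : α} (h : σ.SameCycle a b) : y a = y b :=
  sameCycle_one.1 (h.map_of_semiconj (σ := 1) hy)

theorem exists_forall_sameCycle (α : Type*) [Finite α] :
    ∃ τ : Perm α, ∀ a b, τ.SameCycle a b := by
  obtain ⟨k, ⟨e⟩⟩ := Finite.exists_equiv_fin α
  have hrot : ∀ i j, (finRotate k).SameCycle i j := by
    intro i j
    rcases lt_or_ge k 2 with hk | hk
    · have : Subsingleton (Fin k) := Fin.subsingleton_iff_le_one.2 (by omega)
      rw [Subsingleton.elim i j]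
    · have hsupp : ∀ i, finRotate k i ≠ i := fun i => by
        rw [← mem_support, support_finRotate_of_le hk]; exact Finset.mem_univ i
      exact (isCycle_finRotate_of_le hk).sameCycle (hsupp i) (hsupp j)
  refine ⟨e.symm.permCongr (finRotate k), fun a b => ?_⟩
  simpa using (hrot (e a) (e b)).map_of_semiconj (g := e.symm) (fun i => by simp)

theorem exists_sameCycle_iff [Finite α] (f : α → β) :
    ∃ σ : Perm α, ∀ a b, σ.SameCycle a b ↔ f a = f b := by
  choose τ hτ using fun b => exists_forall_sameCycle {a // f a = b}
  let σ : Perm α := (Equiv.sigmaFiberEquiv f).permCongr (sigmaCongrRight τ)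
  have hσ : ∀ b (a : {a // f a = b}), σ a = τ b a := by rintro _ ⟨a, rfl⟩; rfl
  refine ⟨σ, fun a b => ⟨fun h => h.apply_eq_of_forall_apply_eq fun a => ?_, fun h => ?_⟩⟩
  · rw [hσ (f a) ⟨a, rfl⟩]
    exact (τ (f a) ⟨a, rfl⟩).2
  · exact (hτ (f a) ⟨a, rfl⟩ ⟨b, h.symm⟩).map_of_semiconj (g := Subtype.val)
      fun a => (hσ _ a).symm

end Equiv.Perm

section

variable {n : ℕ}

open Finset

theorem ptype_comp_perm (x : Fin n → ℝ) (e : Equiv.Perm (Fin n)) :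
    ptype (x ∘ e) = ptype x := by
  have himage : univ.image (x ∘ e) = univ.image x := by
    rw [← image_image, image_univ_equiv]
  unfold ptype
  rw [himage]
  refine Multiset.map_congr rfl fun v _ => ?_
  exact card_equiv e (by simp)

theorem ptype_psmul (σ : Equiv.Perm (Fin n)) (x : Fin n → ℝ) : ptype (psmul σ x) = ptype x :=
  ptype_comp_perm x σ⁻¹

theorem card_ptype (x : Fin n → ℝ) : (ptype x).card = (univ.image x).card :=
  Multiset.card_map _ _

theorem ptype_comp_of_injOn {g : ℝ → ℝ} {w : Fin n → ℝ} (hg : Set.InjOn g (univ.image w)) :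
    ptype (g ∘ w) = ptype w := by
  unfold ptype
  rw [← image_image, image_val_of_injOn hg, Multiset.map_map]
  refine Multiset.map_congr rfl fun v hv => ?_
  exact congrArg card <|
    filter_congr fun j _ => hg.eq_iff (mem_image_of_mem w (mem_univ j)) hv

theorem ptype_eq_of_factorsThrough {y w : Fin n → ℝ} (hyw : y.FactorsThrough w)
    (hcard : (ptype w).card ≤ (ptype y).card) : ptype y = ptype w := by
  set g := Function.extend w y fun _ => 0
  have hy : y = g ∘ w := (hyw.extend_comp _).symm
  rw [hy, card_ptype, card_ptype, ← image_image] at hcard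
  rw [hy]
  exact ptype_comp_of_injOn (card_image_iff.1 (le_antisymm card_image_le hcard))

theorem psmul_eq_self_iff {σ : Equiv.Perm (Fin n)} {y : Fin n → ℝ} :
    psmul σ y = y ↔ ∀ i, y (σ i) = y i := by
  simp only [psmul, funext_iff, Function.comp_apply]
  exact ⟨fun h i => by simpa using (h (σ i)).symm,
    fun h i => by simpa using (h (σ⁻¹ i)).symm⟩

theorem chi_pos {σ : Equiv.Perm (Fin n)} {w : Fin n → ℝ} (hw : psmul σ w = w) :
    0 < chi w σ := by
  have : Finite {y // y ∈ porbit w ∧ psmul σ y = y} :=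
    ((Set.finite_range fun τ => psmul τ w).subset fun _ hy => hy.1).to_subtype
  have : Nonempty {y // y ∈ porbit w ∧ psmul σ y = y} := ⟨w, ⟨1, by simp [psmul]⟩, hw⟩
  exact Nat.card_pos

theorem chi_eq_zero_of_ptype_ne {σ : Equiv.Perm (Fin n)} {w v : Fin n → ℝ}
    (hσ : ∀ i j, σ.SameCycle i j ↔ w i = w j) (hcard : (ptype w).card ≤ (ptype v).card)
    (hne : ptype v ≠ ptype w) : chi v σ = 0 := by
  have : IsEmpty {y // y ∈ porbit v ∧ psmul σ y = y} := by
    refine ⟨fun ⟨y, ⟨τ, hτ⟩, hfix⟩ => hne ?_⟩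
    subst hτ
    have hyw : (psmul τ v).FactorsThrough w := fun i j hij =>
      ((hσ i j).2 hij).apply_eq_of_forall_apply_eq (psmul_eq_self_iff.1 hfix)
    rw [← ptype_psmul τ v] at hcard ⊢
    exact ptype_eq_of_factorsThrough hyw hcard
  exact Nat.card_of_isEmpty

end

/-- the family `(χ_λ)_{λ a partition of n}` is linearly independent: if reals
`(c_λ)` satisfy `Σ_λ c_λ · χ_λ(σ) = 0` for all `σ ∈ S_n`, then all `c_λ = 0`. Here `x λ` is a
chosen point of type `λ` and `χ_λ = chi (x λ)`. -/
theorem stmt_14 {n : ℕ} (x : Nat.Partition n → (Fin n → ℝ))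
    (hx : ∀ l, ptype (x l) = l.parts) (c : Nat.Partition n → ℝ)
    (h : ∀ σ : Equiv.Perm (Fin n),
      ∑ l : Nat.Partition n, c l * (chi (x l) σ : ℝ) = 0) :
    ∀ l, c l = 0 := by
  by_contra! hc
  obtain ⟨l₀, hl₀, hmin⟩ := (Finset.univ.filter (c · ≠ 0)).exists_min_image
    (fun l => l.parts.card) (by simpa [Finset.filter_nonempty_iff] using hc)
  obtain ⟨σ, hσ⟩ := Equiv.Perm.exists_sameCycle_iff (x l₀)
  have hfix : psmul σ (x l₀) = x l₀ := psmul_eq_self_iff.2 fun i =>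
    (hσ _ _).1 (Equiv.Perm.sameCycle_apply_left.2 .rfl)
  have hvanish : ∀ l ≠ l₀, c l * (chi (x l) σ : ℝ) = 0 := by
    intro l hl
    by_cases hcl : c l = 0
    · rw [hcl, zero_mul]
    rw [chi_eq_zero_of_ptype_ne hσ, Nat.cast_zero, mul_zero]
    · rw [hx, hx]
      exact hmin l (by simpa using hcl)
    · rw [hx, hx]
      exact fun hparts => hl (Nat.Partition.ext hparts)
  have := h σ
  rw [Finset.sum_eq_single l₀ (fun l _ => hvanish l) (by simp)] at this
  exact mul_ne_zero (by simpa using hl₀) (by exact_mod_cast (chi_pos hfix).ne') this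
end

section
/- Let B = {f_1,…,f_N} be a linearly independent set of functions ℝ^n → ℝ, each of which is a monomial, i.e. f_i(x) = x_1^{α_1} x_2^{α_2} ⋯ x_n^{α_n} for some exponent vector α ∈ ℕ^n, and suppose B is symmetric under the action (σ • f)(x) = f(σ⁻¹ • x). Let F = span(B) and let P = {a_1,…,a_N} be a symmetric subset of ℝ^n such that the Lagrange interpolation problem with space F and nodes P is unisolvent. Then B and P are equivalent as S_n-sets: there exists a bijection ψ : B → P with ψ(σ • f) = σ • ψ(f) for all σ ∈ S_n and f ∈ B. -/
/-- A set `B` of functions and a set `P` of points are equivalent as `S_n`-sets: there is an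
`S_n`-equivariant bijection `B → P`. -/
def FPEquiv {n : ℕ} (B : Set ((Fin n → ℝ) → ℝ)) (P : Set (Fin n → ℝ)) : Prop :=
  ∃ ψ : B ≃ P, ∀ (σ : Equiv.Perm (Fin n)) (z w : B),
    fsmul σ (z : (Fin n → ℝ) → ℝ) = (w : (Fin n → ℝ) → ℝ) →
      psmul σ ((ψ z : Fin n → ℝ)) = ((ψ w : Fin n → ℝ))

open Set Function MulAction Equiv

-- With this action, `σ • x = psmul σ x` and `σ • φ = fsmul σ φ` hold definitionally.
attribute [local instance] arrowAction

@[simp]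
theorem arrowAction_smul_apply {G A B : Type*} [DivisionMonoid G] [MulAction G A] (g : G)
    (F : A → B) (a : A) : (g • F) a = F (g⁻¹ • a) :=
  rfl

theorem Unisolvent.isUnit_evalMatrix {n N : ℕ} {f : Fin N → (Fin n → ℝ) → ℝ}
    {a : Fin N → Fin n → ℝ} (hu : Unisolvent (Submodule.span ℝ (range f)) a) :
    IsUnit (Matrix.of fun i j => f i (a j)) := by
  rw [← Matrix.vecMul_surjective_iff_isUnit]
  intro b
  obtain ⟨⟨φ, hφ⟩, hφb, -⟩ := hu b
  obtain ⟨c, rfl⟩ := (Submodule.mem_span_range_iff_exists_fun ℝ).1 hφ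
  refine ⟨c, funext fun j => ?_⟩
  simpa [Matrix.vecMul, dotProduct, Finset.sum_apply] using hφb j

section Counting

variable {G X ι : Type*} [Group G] [MulAction G X]

theorem exists_perm_apply_eq_smul [Finite ι] {v : ι → X} (hv : Injective v) {g : G}
    (hg : ∀ x ∈ range v, g • x ∈ range v) : ∃ π : Perm ι, ∀ i, v (π i) = g • v i := by
  choose π hπ using fun i => hg (v i) (mem_range_self i)
  have hinj : Injective π := fun i j h => hv (smul_left_cancel g (by rw [← hπ, ← hπ, h]))
  exact ⟨.ofBijective π (Finite.injective_iff_bijective.1 hinj), hπ⟩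

theorem ncard_range_inter_fixedBy {v : ι → X} (hv : Injective v) {π : Perm ι} {g : G}
    (hπ : ∀ i, v (π i) = g • v i) : (range v ∩ fixedBy X g).ncard = (fixedPoints π).ncard := by
  rw [← ncard_image_of_injective _ hv]
  congr 1
  ext x
  simp only [mem_inter_iff, mem_range, mem_fixedBy, mem_image]
  constructor
  · rintro ⟨⟨i, rfl⟩, hi⟩
    exact ⟨i, hv (by rw [hπ, hi]), rfl⟩
  · rintro ⟨i, hi, rfl⟩
    exact ⟨⟨i, rfl⟩, by rw [← hπ, hi.eq]⟩

theorem Matrix.ncard_fixedPoints_eq_of_submatrix_eq {R : Type*} [Fintype ι] [DecidableEq ι]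
    [CommRing R] [CharZero R] {V : Matrix ι ι R} (hV : IsUnit V) {π τ : Perm ι}
    (h : V.submatrix π τ = V) : (fixedPoints π).ncard = (fixedPoints τ).ncard := by
  obtain ⟨U, rfl⟩ := hV
  have hcomm : π.permMatrix R * U = U * τ.permMatrix R := by
    rw [PEquiv.toMatrix_toPEquiv_mul, PEquiv.mul_toMatrix_toPEquiv]
    conv_rhs => rw [← h]
    simp [Matrix.submatrix_submatrix]
  have hconj : π.permMatrix R = U * τ.permMatrix R * U⁻¹.val := by
    rw [← hcomm, mul_assoc, Units.mul_inv, mul_one]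
  have htrace : ((fixedPoints π).ncard : R) = (fixedPoints τ).ncard := by
    rw [← Matrix.trace_permutation, ← Matrix.trace_permutation, hconj, Matrix.trace_units_conj]
  exact_mod_cast htrace

theorem ncard_range_inter_fixedBy_eq_of_isUnit {R : Type*} [CommRing R] [CharZero R] [Fintype ι]
    [DecidableEq ι] {f : ι → X → R} {a : ι → X} (hf : Injective f) (ha : Injective a)
    (hfG : ∀ g : G, ∀ φ ∈ range f, g • φ ∈ range f) (haG : ∀ g : G, ∀ x ∈ range a, g • x ∈ range a)
    (hV : IsUnit (Matrix.of fun i j => f i (a j))) (g : G) :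
    (range f ∩ fixedBy (X → R) g).ncard = (range a ∩ fixedBy X g).ncard := by
  obtain ⟨π, hπ⟩ := exists_perm_apply_eq_smul hf (hfG g)
  obtain ⟨τ, hτ⟩ := exists_perm_apply_eq_smul ha (haG g)
  rw [ncard_range_inter_fixedBy hf hπ, ncard_range_inter_fixedBy ha hτ]
  refine Matrix.ncard_fixedPoints_eq_of_submatrix_eq hV (Matrix.ext fun i j => ?_)
  simp [hπ, hτ]

end Counting

namespace Equiv.Perm

variable {ι T : Type*}

theorem mem_stabilizer_iff_apply {τ : Perm ι} {y : ι → T} :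
    τ ∈ stabilizer (Perm ι) y ↔ ∀ i, y (τ i) = y i := by
  rw [mem_stabilizer_iff, funext_iff]
  exact ⟨fun h i => by simpa using (h (τ i)).symm, fun h i => by simpa using (h (τ⁻¹ i)).symm⟩

theorem SameCycle.apply_eq_of_mem_stabilizer {σ : Perm ι} {y : ι → T}
    (hy : σ ∈ stabilizer (Perm ι) y) {i j : ι} (h : σ.SameCycle i j) : y i = y j := by
  obtain ⟨k, rfl⟩ := h
  exact (mem_stabilizer_iff_apply.1 (zpow_mem hy k) i).symm

theorem exists_sameCycle_iff_s18 [Finite ι] (x : ι → T) :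
    ∃ σ : Perm ι, ∀ i j, σ.SameCycle i j ↔ x i = x j := by
  classical
  have := Fintype.ofFinite ι
  choose c hc using fun t => Finset.exists_cycleOn (Finset.univ : Finset {i // x i = t})
  set e := Equiv.sigmaFiberEquiv x
  have hpow : ∀ (k : ℕ) i, ((e.permCongr (sigmaCongrRight c)) ^ k) i =
      ((c (x i) ^ k) ⟨i, rfl⟩ : ι) := by
    intro k i
    rw [← e.permCongrHom_coe, ← map_pow, ← sigmaCongrRightHom_apply, ← map_pow]
    rfl
  have hx : e.permCongr (sigmaCongrRight c) ∈ stabilizer (Perm ι) x :=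
    mem_stabilizer_iff_apply.2 fun i => by
      rw [← pow_one (e.permCongr _), hpow]
      exact ((c (x i) ^ 1) ⟨i, rfl⟩).2
  refine ⟨e.permCongr (sigmaCongrRight c), fun i j => ⟨(·.apply_eq_of_mem_stabilizer hx), ?_⟩⟩
  intro hij
  obtain ⟨k, hk⟩ := (hc (x i)).1.exists_pow_eq' (Set.toFinite _) (a := ⟨i, rfl⟩)
    (b := ⟨j, hij.symm⟩) (by simp) (by simp)
  exact ⟨k, by rw [zpow_natCast, hpow, hk]⟩

theorem exists_mem_stabilizer_forall_le [Finite ι] (x : ι → T) :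
    ∃ σ ∈ stabilizer (Perm ι) x, ∀ {T' : Type*} (y : ι → T'),
      σ ∈ stabilizer (Perm ι) y → stabilizer (Perm ι) x ≤ stabilizer (Perm ι) y := by
  obtain ⟨σ, hσ⟩ := exists_sameCycle_iff_s18 x
  refine ⟨σ, mem_stabilizer_iff_apply.2 fun i => (hσ _ _).1 (sameCycle_apply_left.2 .rfl),
    fun y hy τ hτ => mem_stabilizer_iff_apply.2 fun i => ?_⟩
  exact ((hσ _ _).2 (mem_stabilizer_iff_apply.1 hτ i)).apply_eq_of_mem_stabilizer hy

end Equiv.Perm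

section Monomial
variable {ι : Type*} [Fintype ι]

def monomialFun (β : ι → ℕ) (x : ι → ℝ) : ℝ := ∏ j, x j ^ β j

theorem monomialFun_injective : Injective (monomialFun (ι := ι)) := by
  classical
  intro β γ h
  funext j
  have hj := congrFun h (Pi.mulSingle j 2)
  simp only [monomialFun, Pi.mulSingle_apply] at hj
  simpa [Finset.prod_ite_eq'] using hj

theorem smul_monomialFun (σ : Perm ι) (β : ι → ℕ) : σ • monomialFun β = monomialFun (σ • β) := by
  funext x
  exact Fintype.prod_equiv σ _ _ fun j => by simp

theorem stabilizer_monomialFun (β : ι → ℕ) :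
    stabilizer (Perm ι) (monomialFun β) = stabilizer (Perm ι) β := by
  ext σ
  rw [mem_stabilizer_iff, mem_stabilizer_iff, smul_monomialFun, monomialFun_injective.eq_iff]

end Monomial

theorem Set.BijOn.piecewise_sdiff {α β : Type*} {s s' : Set α} {t t' : Set β} {f g : α → β}
    [∀ x, Decidable (x ∈ s)] (hf : BijOn f s t) (hg : BijOn g (s' \ s) (t' \ t)) (hs : s ⊆ s')
    (ht : t ⊆ t') : BijOn (s.piecewise f g) s' t' := by
  have hf' := hf.congr (piecewise_eqOn s f g).symm
  have hg' := hg.congr ((piecewise_eqOn_compl s f g).mono fun x hx => hx.2).symm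
  rw [← union_sdiff_cancel hs, ← union_sdiff_cancel ht]
  refine hf'.union hg' ((injOn_union disjoint_sdiff_right).2 ⟨hf'.injOn, hg'.injOn, ?_⟩)
  intro x hx y hy hxy
  exact (hg'.mapsTo hy).2 (hxy ▸ hf'.mapsTo hx)

theorem Set.ncard_inter_eq_add_of_subset {α : Type*} {A O : Set α} (hA : A.Finite) (hO : O ⊆ A)
    (F : Set α) : (A ∩ F).ncard = (O ∩ F).ncard + ((A \ O) ∩ F).ncard := by
  rw [← ncard_inter_add_ncard_sdiff_eq_ncard (A ∩ F) O (hA.inter_of_left _)]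
  congr 2
  · rw [inter_right_comm, inter_eq_right.2 hO]
  · rw [inter_sdiff_right_comm]

namespace MulAction

variable {G α β : Type*} [Group G] [MulAction G α] [MulAction G β]

theorem smul_eq_smul_of_stabilizer_le {x : α} {y : β} (h : stabilizer G x ≤ stabilizer G y)
    {g g' : G} (hg : g • x = g' • x) : g • y = g' • y := by
  have hx : g'⁻¹ * g ∈ stabilizer G x := by rw [mem_stabilizer_iff, mul_smul, hg, inv_smul_smul]
  have hy := mem_stabilizer_iff.1 (h hx)
  rwa [mul_smul, inv_smul_eq_iff] at hy

theorem exists_bijOn_orbit_of_stabilizer_eq {x : α} {y : β}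
    (h : stabilizer G x = stabilizer G y) :
    ∃ Φ : α → β, BijOn Φ (orbit G x) (orbit G y) ∧
      ∀ g : G, ∀ z ∈ orbit G x, Φ (g • z) = g • Φ z := by
  classical
  let Φ : α → β := fun z => if hz : z ∈ orbit G x then (mem_orbit_iff.1 hz).choose • y else y
  have hΦ (g : G) : Φ (g • x) = g • y := by
    have hz : g • x ∈ orbit G x := mem_orbit x g
    simp only [Φ, dif_pos hz]
    exact smul_eq_smul_of_stabilizer_le h.le (mem_orbit_iff.1 hz).choose_spec
  refine ⟨Φ, ⟨?_, ?_, ?_⟩, ?_⟩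
  · rintro _ ⟨g, rfl⟩
    exact hΦ g ▸ mem_orbit y g
  · rintro _ ⟨g, rfl⟩ _ ⟨g', rfl⟩ hgg'
    exact smul_eq_smul_of_stabilizer_le h.ge ((hΦ g).symm.trans (hgg'.trans (hΦ g')))
  · rintro _ ⟨g, rfl⟩
    exact ⟨g • x, mem_orbit x g, hΦ g⟩
  · rintro g _ ⟨g', rfl⟩
    rw [smul_smul, hΦ, hΦ, mul_smul]

theorem ncard_inter_fixedBy_eq_of_bijOn {Φ : α → β} {A : Set α} {C : Set β}
    (hA : ∀ g : G, ∀ z ∈ A, g • z ∈ A) (hΦ : BijOn Φ A C)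
    (hΦG : ∀ g : G, ∀ z ∈ A, Φ (g • z) = g • Φ z) (g : G) :
    (A ∩ fixedBy α g).ncard = (C ∩ fixedBy β g).ncard := by
  refine BijOn.ncard_eq ⟨fun z hz => ⟨hΦ.mapsTo hz.1, ?_⟩, hΦ.injOn.mono inter_subset_left, ?_⟩
  · rw [mem_fixedBy, ← hΦG g z hz.1, hz.2]
  · rintro _ ⟨hw, hwg⟩
    obtain ⟨z, hz, rfl⟩ := hΦ.surjOn hw
    refine ⟨z, ⟨hz, hΦ.injOn (hA g z hz) hz ?_⟩, rfl⟩
    rw [hΦG g z hz, hwg]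

theorem exists_stabilizer_eq_of_maximal {A : Set α} {C : Set β} (hAfin : A.Finite)
    (hfix : ∀ g : G, (A ∩ fixedBy α g).ncard = (C ∩ fixedBy β g).ncard)
    {x : α} (hx : x ∈ A)
    (hdet : ∃ g ∈ stabilizer G x, ∀ y ∈ C, g ∈ stabilizer G y → stabilizer G x ≤ stabilizer G y)
    (hmax : ∀ y ∈ C, stabilizer G x ≤ stabilizer G y → stabilizer G y ≤ stabilizer G x) :
    ∃ y ∈ C, stabilizer G x = stabilizer G y := by
  obtain ⟨g, hgx, hg⟩ := hdet
  have hpos : 0 < (A ∩ fixedBy α g).ncard := (ncard_pos (hAfin.inter_of_left _)).2 ⟨x, hx, hgx⟩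
  obtain ⟨y, hy, hgy⟩ := nonempty_of_ncard_ne_zero (hfix g ▸ hpos).ne'
  exact ⟨y, hy, le_antisymm (hg y hy hgy) (hmax y hy (hg y hy hgy))⟩

variable {A : Set α} {C : Set β}

theorem exists_stabilizer_eq (hAfin : A.Finite) (hCfin : C.Finite) (hAne : A.Nonempty)
    (hAC : ∀ x ∈ A, ∃ g ∈ stabilizer G x, ∀ y ∈ C,
      g ∈ stabilizer G y → stabilizer G x ≤ stabilizer G y)
    (hCA : ∀ y ∈ C, ∃ g ∈ stabilizer G y, ∀ x ∈ A,
      g ∈ stabilizer G x → stabilizer G y ≤ stabilizer G x)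
    (hfix : ∀ g : G, (A ∩ fixedBy α g).ncard = (C ∩ fixedBy β g).ncard) :
    ∃ x ∈ A, ∃ y ∈ C, stabilizer G x = stabilizer G y := by
  obtain ⟨H, ⟨hH, hHmax⟩⟩ := ((hAfin.image (stabilizer G)).union (hCfin.image (stabilizer G))
    ).exists_maximal (hAne.image _ |>.mono subset_union_left)
  rcases hH with ⟨x, hx, rfl⟩ | ⟨y, hy, rfl⟩
  · exact ⟨x, hx, exists_stabilizer_eq_of_maximal hAfin hfix hx (hAC x hx)
      fun y hy => hHmax (Or.inr ⟨y, hy, rfl⟩)⟩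
  · obtain ⟨x, hx, hxy⟩ := exists_stabilizer_eq_of_maximal hCfin (fun g => (hfix g).symm)
      hy (hCA y hy) fun x hx => hHmax (Or.inl ⟨x, hx, rfl⟩)
    exact ⟨x, hx, y, hy, hxy.symm⟩

theorem smul_mem_orbit_iff {x z : α} (g : G) : g • z ∈ orbit G x ↔ z ∈ orbit G x := by
  rw [← orbit_eq_iff, orbit_smul, orbit_eq_iff]

theorem piecewise_orbit_smul {x : α} {Φ Ψ : α → β} [∀ z, Decidable (z ∈ orbit G x)]
    (hΦG : ∀ g : G, ∀ z ∈ orbit G x, Φ (g • z) = g • Φ z)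
    (hΨG : ∀ g : G, ∀ z ∈ A \ orbit G x, Ψ (g • z) = g • Ψ z) (g : G) (z : α) (hz : z ∈ A) :
    (orbit G x).piecewise Φ Ψ (g • z) = g • (orbit G x).piecewise Φ Ψ z := by
  by_cases hzx : z ∈ orbit G x
  · rw [piecewise_eq_of_mem _ _ _ hzx, piecewise_eq_of_mem _ _ _ ((smul_mem_orbit_iff g).2 hzx),
      hΦG g z hzx]
  · rw [piecewise_eq_of_notMem _ _ _ hzx,
      piecewise_eq_of_notMem _ _ _ (by rwa [smul_mem_orbit_iff]), hΨG g z ⟨hz, hzx⟩]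

theorem exists_bijOn_of_ncard_inter_fixedBy_eq [Nonempty β] (hAfin : A.Finite) (hCfin : C.Finite)
    (hA : ∀ g : G, ∀ x ∈ A, g • x ∈ A) (hC : ∀ g : G, ∀ y ∈ C, g • y ∈ C)
    (hAC : ∀ x ∈ A, ∃ g ∈ stabilizer G x, ∀ y ∈ C,
      g ∈ stabilizer G y → stabilizer G x ≤ stabilizer G y)
    (hCA : ∀ y ∈ C, ∃ g ∈ stabilizer G y, ∀ x ∈ A,
      g ∈ stabilizer G x → stabilizer G y ≤ stabilizer G x)
    (hfix : ∀ g : G, (A ∩ fixedBy α g).ncard = (C ∩ fixedBy β g).ncard) :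
    ∃ Ψ : α → β, BijOn Ψ A C ∧ ∀ g : G, ∀ x ∈ A, Ψ (g • x) = g • Ψ x := by
  classical
  induction hn : A.ncard using Nat.strong_induction_on generalizing A C with
  | _ n ih =>
  rcases A.eq_empty_or_nonempty with rfl | hAne
  · obtain rfl : C = ∅ := (ncard_eq_zero hCfin).1 (by simpa using (hfix 1).symm)
    exact ⟨fun _ => Classical.arbitrary β, bijOn_empty _, by simp⟩
  obtain ⟨x, hx, y, hy, hxy⟩ := exists_stabilizer_eq hAfin hCfin hAne hAC hCA hfix
  obtain ⟨Φ, hΦ, hΦG⟩ := exists_bijOn_orbit_of_stabilizer_eq hxy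
  have hxA : orbit G x ⊆ A := by rintro _ ⟨g, rfl⟩; exact hA g x hx
  have hyC : orbit G y ⊆ C := by rintro _ ⟨g, rfl⟩; exact hC g y hy
  have hfix' (g : G) : ((A \ orbit G x) ∩ fixedBy α g).ncard =
      ((C \ orbit G y) ∩ fixedBy β g).ncard := by
    have := ncard_inter_fixedBy_eq_of_bijOn (fun g _ => mem_orbit_of_mem_orbit g) hΦ hΦG g
    have := ncard_inter_eq_add_of_subset hAfin hxA (fixedBy α g)
    have := ncard_inter_eq_add_of_subset hCfin hyC (fixedBy β g)
    have := hfix g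
    omega
  have hlt : (A \ orbit G x).ncard < n :=
    hn ▸ ncard_lt_ncard (hxA.sdiff_ssubset_of_nonempty ⟨x, mem_orbit_self x⟩) hAfin
  obtain ⟨Ψ, hΨ, hΨG⟩ := ih _ hlt hAfin.sdiff hCfin.sdiff
    (fun g z hz => ⟨hA g z hz.1, by rw [smul_mem_orbit_iff]; exact hz.2⟩)
    (fun g w hw => ⟨hC g w hw.1, by rw [smul_mem_orbit_iff]; exact hw.2⟩)
    (fun z hz => (hAC z hz.1).imp fun g ⟨hgz, hg⟩ => ⟨hgz, fun w hw => hg w hw.1⟩)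
    (fun w hw => (hCA w hw.1).imp fun g ⟨hgw, hg⟩ => ⟨hgw, fun z hz => hg z hz.1⟩) hfix' rfl
  exact ⟨_, hΦ.piecewise_sdiff hΨ hxA hyC, piecewise_orbit_smul hΦG hΨG⟩

end MulAction

/-- in the symmetric unisolvent setup, if moreover each basis function is a
monomial `x ↦ x_1^{α_1} ⋯ x_n^{α_n}`, then the basis set `B` and the node set `P` are
equivalent as `S_n`-sets. -/
theorem stmt_18 {n N : ℕ} (f : Fin N → ((Fin n → ℝ) → ℝ)) (hf : LinearIndependent ℝ f)
    (hmono : ∀ i : Fin N, ∃ α : Fin n → ℕ, f i = fun x => ∏ j : Fin n, x j ^ α j)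
    (hBsym : ∀ σ, ∀ g ∈ Set.range f, fsmul σ g ∈ Set.range f)
    (a : Fin N → (Fin n → ℝ)) (ha : Function.Injective a)
    (hPsym : ∀ σ, ∀ p ∈ Set.range a, psmul σ p ∈ Set.range a)
    (hu : Unisolvent (Submodule.span ℝ (Set.range f)) a) :
    FPEquiv (Set.range f) (Set.range a) := by
  choose α hα using hmono
  have hstab (i : Fin N) : stabilizer (Perm (Fin n)) (f i) = stabilizer (Perm (Fin n)) (α i) :=
    (congrArg _ (hα i)).trans (stabilizer_monomialFun (α i))
  have hfa : ∀ φ ∈ range f, ∃ σ ∈ stabilizer (Perm (Fin n)) φ, ∀ x ∈ range a,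
      σ ∈ stabilizer _ x → stabilizer (Perm (Fin n)) φ ≤ stabilizer _ x := by
    rintro _ ⟨i, rfl⟩
    rw [hstab]
    exact (Perm.exists_mem_stabilizer_forall_le (α i)).imp fun σ ⟨hσ, hle⟩ => ⟨hσ, fun x _ => hle x⟩
  have haf : ∀ x ∈ range a, ∃ σ ∈ stabilizer (Perm (Fin n)) x, ∀ φ ∈ range f,
      σ ∈ stabilizer _ φ → stabilizer (Perm (Fin n)) x ≤ stabilizer _ φ := by
    rintro _ ⟨j, rfl⟩
    obtain ⟨σ, hσ, hle⟩ := Perm.exists_mem_stabilizer_forall_le (a j)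
    refine ⟨σ, hσ, ?_⟩
    rintro _ ⟨i, rfl⟩
    rw [hstab]
    exact hle _
  obtain ⟨Ψ, hΨ, hΨG⟩ := exists_bijOn_of_ncard_inter_fixedBy_eq (finite_range f)
    (finite_range a) hBsym hPsym hfa haf
    (ncard_range_inter_fixedBy_eq_of_isUnit hf.injective ha hBsym hPsym hu.isUnit_evalMatrix)
  refine ⟨hΨ.equiv Ψ, fun σ z w hzw => ?_⟩
  change σ • Ψ z = Ψ w
  rw [← hΨG σ z z.2]
  exact congrArg Ψ hzw
end
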